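/- arXiv:1204.0272 — 8 statements merged into one kernel-verified Lean document; each statement's English description precedes it below -/
import Mathlib

section
/- Let A ⊆ ℝ be an open invex set with respect to η : A × A → ℝ and a, b ∈ A with a < a + η(b,a). If f : A → ℝ is differentiable and f′ is integrable on [a, a+η(b,a)], then (f(a) + f(a+η(b,a)))/2 − (Γ(α+1)/(2 η(b,a)^α)) [J_{a+}^α f(a+η(b,a)) + J_{(a+η(b,a))−}^α f(a)] = (η(b,a)/2) ∫_0^1 [t^α − (1−t)^α] f′(a + t·η(b,a)) dt, for every α > 0. -/
/-!
Substituting `x = a + t η(b,a)` turns the two Riemann–Liouville integrals into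
`η(b,a)^α / Γ(α)` times `∫₀¹ (1 - t)^(α-1) g` and `∫₀¹ t^(α-1) g`, where `g t = f (a + t η(b,a))`.
Integrating `∫₀¹ t^α g'` and `∫₀¹ (1 - t)^α g'` by parts (the weights have integrable derivatives
since `α > 0`) expresses them through `g 0`, `g 1` and these two integrals; subtracting the two
identities gives the claim.
-/

open MeasureTheory intervalIntegral

/-- Riemann-Liouville left fractional integral `J_{a+}^α f(x)`. -/
noncomputable def JL (α a x : ℝ) (f : ℝ → ℝ) : ℝ :=
  (1 / Real.Gamma α) * ∫ t in a..x, (x - t) ^ (α - 1) * f t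

/-- Riemann-Liouville right fractional integral `J_{b-}^α f(x)`. -/
noncomputable def JR (α x b : ℝ) (f : ℝ → ℝ) : ℝ :=
  (1 / Real.Gamma α) * ∫ t in x..b, (t - x) ^ (α - 1) * f t

/-- `A` is invex with respect to `η`. -/
def InvexSet (A : Set ℝ) (η : ℝ → ℝ → ℝ) : Prop :=
  ∀ x ∈ A, ∀ y ∈ A, ∀ t ∈ Set.Icc (0:ℝ) 1, x + t * η y x ∈ A

/-- `f` is preinvex with respect to `η` on `A`. -/
def PreinvexOn (A : Set ℝ) (η : ℝ → ℝ → ℝ) (f : ℝ → ℝ) : Prop :=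
  ∀ x ∈ A, ∀ y ∈ A, ∀ t ∈ Set.Icc (0:ℝ) 1,
    f (x + t * η y x) ≤ (1 - t) * f x + t * f y

/-- Condition C of Mohan and Neogy. -/
def CondC (A : Set ℝ) (η : ℝ → ℝ → ℝ) : Prop :=
  ∀ x ∈ A, ∀ y ∈ A, ∀ t ∈ Set.Icc (0:ℝ) 1,
    η y (y + t * η x y) = -t * η x y ∧ η x (y + t * η x y) = (1 - t) * η x y

open Set

theorem InvexSet.Icc_subset {A : Set ℝ} {η : ℝ → ℝ → ℝ} (hA : InvexSet A η) {a b : ℝ}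
    (ha : a ∈ A) (hb : b ∈ A) (hη : 0 < η b a) : Icc a (a + η b a) ⊆ A := by
  intro x hx
  have ht : (x - a) / η b a ∈ Icc (0:ℝ) 1 :=
    ⟨div_nonneg (by linarith [hx.1]) hη.le, (div_le_one₀ hη).2 (by linarith [hx.2])⟩
  simpa [div_mul_cancel₀ _ hη.ne'] using hA a ha b hb _ ht

section UnitInterval

variable {α : ℝ} {g g' : ℝ → ℝ}

theorem integral_rpow_mul_deriv (hα : 0 < α) (hg : ContinuousOn g (Icc 0 1))
    (hgg' : ∀ t ∈ Ioo (0:ℝ) 1, HasDerivAt g (g' t) t) (hg' : IntervalIntegrable g' volume 0 1) :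
    ∫ t in (0:ℝ)..1, t ^ α * g' t = g 1 - α * ∫ t in (0:ℝ)..1, t ^ (α - 1) * g t := by
  rw [← uIcc_of_le zero_le_one] at hg
  have parts := integral_mul_deriv_eq_deriv_mul_of_hasDerivAt (u := fun t => t ^ α)
    (u' := fun t => α * t ^ (α - 1)) (Real.continuous_rpow_const hα.le).continuousOn hg
    (fun t ht => Real.hasDerivAt_rpow_const (Or.inl (by simpa using ht.1 : (0:ℝ) < t).ne'))
    (by simpa using hgg')
    ((intervalIntegrable_rpow' (by linarith)).const_mul α) hg'
  simpa only [Real.one_rpow, Real.zero_rpow hα.ne', one_mul, zero_mul, sub_zero, mul_assoc,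
    intervalIntegral.integral_const_mul] using parts

theorem integral_one_sub_rpow_mul_deriv (hα : 0 < α) (hg : ContinuousOn g (Icc 0 1))
    (hgg' : ∀ t ∈ Ioo (0:ℝ) 1, HasDerivAt g (g' t) t) (hg' : IntervalIntegrable g' volume 0 1) :
    ∫ t in (0:ℝ)..1, (1 - t) ^ α * g' t =
      -g 0 + α * ∫ t in (0:ℝ)..1, (1 - t) ^ (α - 1) * g t := by
  rw [← uIcc_of_le zero_le_one] at hg
  have hw : IntervalIntegrable (fun t : ℝ => (1 - t) ^ (α - 1)) volume 0 1 := by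
    simpa using ((intervalIntegrable_rpow' (a := 0) (b := 1)
      (by linarith : -1 < α - 1)).comp_sub_left 1).symm
  have parts := integral_mul_deriv_eq_deriv_mul_of_hasDerivAt (u := fun t => (1 - t) ^ α)
    (u' := fun t => -(α * (1 - t) ^ (α - 1)))
    ((Real.continuous_rpow_const hα.le).comp (continuous_const.sub continuous_id)).continuousOn hg
    (fun t ht => by
      simpa using ((hasDerivAt_id t).const_sub 1).rpow_const (p := α)
        (Or.inl (sub_ne_zero.2 (by simpa using ht.2 : t < 1).ne')))
    (by simpa using hgg') (hw.const_mul α).neg hg'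
  simpa only [sub_zero, sub_self, Real.one_rpow, Real.zero_rpow hα.ne', one_mul, zero_mul,
    zero_sub, neg_mul, mul_assoc, intervalIntegral.integral_neg,
    intervalIntegral.integral_const_mul, sub_neg_eq_add] using parts

theorem fractional_trapezoid_identity_unitInterval (hα : 0 < α) (hg : ContinuousOn g (Icc 0 1))
    (hgg' : ∀ t ∈ Ioo (0:ℝ) 1, HasDerivAt g (g' t) t) (hg' : IntervalIntegrable g' volume 0 1) :
    (g 0 + g 1) / 2 - α / 2 * ((∫ t in (0:ℝ)..1, t ^ (α - 1) * g t) +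
        ∫ t in (0:ℝ)..1, (1 - t) ^ (α - 1) * g t) =
      1 / 2 * ∫ t in (0:ℝ)..1, (t ^ α - (1 - t) ^ α) * g' t := by
  have hpow : Continuous fun t : ℝ => t ^ α := Real.continuous_rpow_const hα.le
  have hK₁ : IntervalIntegrable (fun t => t ^ α * g' t) volume 0 1 :=
    hg'.continuousOn_mul hpow.continuousOn
  have hK₂ : IntervalIntegrable (fun t => (1 - t) ^ α * g' t) volume 0 1 :=
    hg'.continuousOn_mul (hpow.comp (continuous_const.sub continuous_id)).continuousOn
  simp_rw [sub_mul]
  rw [intervalIntegral.integral_sub hK₁ hK₂, integral_rpow_mul_deriv hα hg hgg' hg',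
    integral_one_sub_rpow_mul_deriv hα hg hgg' hg']
  ring

end UnitInterval

theorem integral_eq_mul_integral_unitInterval (F : ℝ → ℝ) (a : ℝ) {h : ℝ} (hh : h ≠ 0) :
    ∫ u in a..a + h, F u = h * ∫ t in (0:ℝ)..1, F (a + t * h) := by
  simp_rw [mul_comm _ h]
  rw [intervalIntegral.integral_comp_add_mul F hh, smul_eq_mul, mul_inv_cancel_left₀ hh,
    mul_zero, mul_one, add_zero]

theorem JR_eq_mul_integral_unitInterval (α a : ℝ) {h : ℝ} (hh : 0 < h) (f : ℝ → ℝ) :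
    JR α a (a + h) f = h ^ α / Real.Gamma α * ∫ t in (0:ℝ)..1, t ^ (α - 1) * f (a + t * h) := by
  have scale : ∀ t ∈ uIcc (0:ℝ) 1, (a + t * h - a) ^ (α - 1) * f (a + t * h) =
      h ^ (α - 1) * (t ^ (α - 1) * f (a + t * h)) := by
    intro t ht
    rw [uIcc_of_le zero_le_one] at ht
    rw [add_sub_cancel_left, Real.mul_rpow ht.1 hh.le]
    ring
  rw [JR, integral_eq_mul_integral_unitInterval _ a hh.ne', integral_congr scale,
    intervalIntegral.integral_const_mul,
    show h ^ α = h ^ (α - 1) * h by rw [← Real.rpow_add_one hh.ne', sub_add_cancel]]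
  ring

theorem JL_eq_mul_integral_unitInterval (α a : ℝ) {h : ℝ} (hh : 0 < h) (f : ℝ → ℝ) :
    JL α a (a + h) f =
      h ^ α / Real.Gamma α * ∫ t in (0:ℝ)..1, (1 - t) ^ (α - 1) * f (a + t * h) := by
  have scale : ∀ t ∈ uIcc (0:ℝ) 1, (a + h - (a + t * h)) ^ (α - 1) * f (a + t * h) =
      h ^ (α - 1) * ((1 - t) ^ (α - 1) * f (a + t * h)) := by
    intro t ht
    rw [uIcc_of_le zero_le_one] at ht
    rw [show a + h - (a + t * h) = h * (1 - t) by ring, Real.mul_rpow hh.le (by linarith [ht.2])]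
    ring
  rw [JL, integral_eq_mul_integral_unitInterval _ a hh.ne', integral_congr scale,
    intervalIntegral.integral_const_mul,
    show h ^ α = h ^ (α - 1) * h by rw [← Real.rpow_add_one hh.ne', sub_add_cancel]]
  ring

theorem fractional_trapezoid_identity {f : ℝ → ℝ} {α a h : ℝ} (hα : 0 < α) (hh : 0 < h)
    (hf : ∀ x ∈ Icc a (a + h), DifferentiableAt ℝ f x)
    (hf' : IntervalIntegrable (deriv f) volume a (a + h)) :
    (f a + f (a + h)) / 2 -
        Real.Gamma (α + 1) / (2 * h ^ α) * (JL α a (a + h) f + JR α a (a + h) f) =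
      h / 2 * ∫ t in (0:ℝ)..1, (t ^ α - (1 - t) ^ α) * deriv f (a + t * h) := by
  have hseg : ∀ t ∈ Icc (0:ℝ) 1, a + t * h ∈ Icc a (a + h) := fun t ht =>
    ⟨by nlinarith [ht.1], by nlinarith [ht.2]⟩
  have hderiv : ∀ t ∈ Icc (0:ℝ) 1,
      HasDerivAt (fun s => f (a + s * h)) (deriv f (a + t * h) * h) t := fun t ht =>
    (hf _ (hseg t ht)).hasDerivAt.comp t
      (by simpa using ((hasDerivAt_id t).mul_const h).const_add a)
  have hg' : IntervalIntegrable (fun t => deriv f (a + t * h) * h) volume 0 1 := by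
    have := (hf'.comp_add_left a).comp_mul_left (c := h)
    simp only [add_sub_cancel_left, sub_self, zero_div, div_self hh.ne'] at this
    simpa only [mul_comm h] using this.mul_const h
  have key := fractional_trapezoid_identity_unitInterval hα
    (fun t ht => (hderiv t ht).continuousAt.continuousWithinAt)
    (fun t ht => hderiv t (Ioo_subset_Icc_self ht)) hg'
  simp only [zero_mul, add_zero, one_mul, ← mul_assoc, intervalIntegral.integral_mul_const] at key
  rw [JL_eq_mul_integral_unitInterval α a hh, JR_eq_mul_integral_unitInterval α a hh,
    Real.Gamma_add_one hα.ne']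
  generalize (∫ t in (0:ℝ)..1, t ^ (α - 1) * f (a + t * h)) = I₁ at key ⊢
  generalize (∫ t in (0:ℝ)..1, (1 - t) ^ (α - 1) * f (a + t * h)) = I₂ at key ⊢
  generalize (∫ t in (0:ℝ)..1, (t ^ α - (1 - t) ^ α) * deriv f (a + t * h)) = K at key ⊢
  have hΓ : Real.Gamma α ≠ 0 := (Real.Gamma_pos_of_pos hα).ne'
  have hpow : h ^ α ≠ 0 := (Real.rpow_pos_of_pos hh α).ne'
  have hweights : α * Real.Gamma α / (2 * h ^ α) *
      (h ^ α / Real.Gamma α * I₂ + h ^ α / Real.Gamma α * I₁) = α / 2 * (I₁ + I₂) := by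
    field_simp
    ring
  rw [hweights]
  linear_combination key

theorem fractional_identity_preinvex_general
    (A : Set ℝ) (η : ℝ → ℝ → ℝ) (a b : ℝ) (f : ℝ → ℝ) (α : ℝ)
    (hinv : InvexSet A η) (ha : a ∈ A) (hb : b ∈ A)
    (hab : a < a + η b a)
    (hdiff : ∀ x ∈ A, DifferentiableAt ℝ f x)
    (hint : IntervalIntegrable (deriv f) volume a (a + η b a))
    (hα : 0 < α) :
    (f a + f (a + η b a)) / 2 -
        Real.Gamma (α + 1) / (2 * (η b a) ^ α) *
          (JL α a (a + η b a) f + JR α a (a + η b a) f) =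
      η b a / 2 *
        ∫ t in (0:ℝ)..1, (t ^ α - (1 - t) ^ α) * deriv f (a + t * η b a) := by
  have hη : 0 < η b a := by linarith
  exact fractional_trapezoid_identity hα hη
    (fun x hx => hdiff x (hinv.Icc_subset ha hb hη hx)) hint

theorem fractional_identity_preinvex
    (A : Set ℝ) (η : ℝ → ℝ → ℝ) (a b : ℝ) (f : ℝ → ℝ) (α : ℝ)
    (hA : IsOpen A) (hinv : InvexSet A η) (ha : a ∈ A) (hb : b ∈ A)
    (hab : a < a + η b a)
    (hdiff : ∀ x ∈ A, DifferentiableAt ℝ f x)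
    (hint : IntervalIntegrable (deriv f) volume a (a + η b a))
    (hα : 0 < α) :
    (f a + f (a + η b a)) / 2 -
        Real.Gamma (α + 1) / (2 * (η b a) ^ α) *
          (JL α a (a + η b a) f + JR α a (a + η b a) f) =
      η b a / 2 *
        ∫ t in (0:ℝ)..1, (t ^ α - (1 - t) ^ α) * deriv f (a + t * η b a) :=
  fractional_identity_preinvex_general A η a b f α hinv ha hb hab hdiff hint hα
end

section
/- Let A ⊆ ℝ be an open invex set with respect to η : A × A → ℝ and a, b ∈ A with a < a + η(b,a), with f′ integrable on [a, a+η(b,a)]. Suppose f : A → ℝ is differentiable and |f′|^q is preinvex on A for some q > 1. Then for every α > 0: |(f(a)+f(a+η(b,a)))/2 − (Γ(α+1)/(2 η(b,a)^α))[J_{a+}^α f(a+η(b,a)) + J_{(a+η(b,a))−}^α f(a)]| ≤ (η(b,a)/(α+1)) (1 − 1/2^α) ((|f′(a)|^q + |f′(b)|^q)/2)^{1/q}. -/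
/-!
Put `c = η(b,a)` and `g(t) = f'(a + t c)`. Substituting `x = a + t c` in both fractional
integrals and integrating by parts against `t^α` and `(1 - t)^α` turns the left-hand side into
`(c/2) |∫₀¹ (t^α - (1-t)^α) g(t) dt|`. Hölder's inequality for the weight
`w(t) = |(1-t)^α - t^α|` bounds this by `(c/2) (∫ w)^{1/p} (∫ w |g|^q)^{1/q}`. Preinvexity gives
`|g(t)|^q ≤ (1-t)|f'(a)|^q + t|f'(b)|^q`, and since `w` is symmetric about `1/2` both affine terms
carry the same mass, so `∫ w |g|^q ≤ (∫ w) (|f'(a)|^q + |f'(b)|^q)/2`.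
Finally `∫₀¹ w = 2/(α+1) (1 - 1/2^α)`.
-/

open MeasureTheory intervalIntegral

theorem Real.HolderConjugate.rpow_one_div_mul_rpow_one_div {p q : ℝ}
    (hpq : p.HolderConjugate q) {x : ℝ} (hx : 0 ≤ x) : x ^ (1 / p) * x ^ (1 / q) = x := by
  rw [← Real.rpow_add_of_nonneg hx hpq.one_div_nonneg hpq.symm.one_div_nonneg,
    hpq.one_div_add_one_div, div_one, Real.rpow_one]

theorem integral_mul_le_weighted_Lp {X : Type*} [MeasurableSpace X] {μ : Measure X}
    {p q : ℝ} (hpq : p.HolderConjugate q) {w h : X → ℝ}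
    (hw : 0 ≤ᵐ[μ] w) (hh : 0 ≤ᵐ[μ] h)
    (hw_int : Integrable w μ) (hh_meas : AEStronglyMeasurable h μ)
    (hwh_int : Integrable (fun x => w x * h x ^ q) μ) :
    ∫ x, w x * h x ∂μ ≤
      (∫ x, w x ∂μ) ^ (1 / p) * (∫ x, w x * h x ^ q ∂μ) ^ (1 / q) := by
  have hw_pow_meas (r : ℝ) : AEStronglyMeasurable (fun x => w x ^ r) μ :=
    (hw_int.aestronglyMeasurable.aemeasurable.pow_const r).aestronglyMeasurable
  have hw_pow (x : X) (hx : 0 ≤ w x) (r : ℝ) (hr : r ≠ 0) : (w x ^ (1 / r)) ^ r = w x := by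
    rw [one_div, Real.rpow_inv_rpow hx hr]
  have hwp : MemLp (fun x => w x ^ (1 / p)) (ENNReal.ofReal p) μ := by
    rw [← integrable_norm_rpow_iff (hw_pow_meas _) (by simpa using hpq.pos)
      ENNReal.ofReal_ne_top, ENNReal.toReal_ofReal hpq.nonneg]
    refine hw_int.congr ?_
    filter_upwards [hw] with x hx
    rw [Real.norm_of_nonneg (Real.rpow_nonneg hx _), hw_pow x hx p hpq.ne_zero]
  have hwq : MemLp (fun x => w x ^ (1 / q) * h x) (ENNReal.ofReal q) μ := by
    rw [← integrable_norm_rpow_iff (f := fun x => w x ^ (1 / q) * h x)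
      ((hw_pow_meas _).mul hh_meas) (by simpa using hpq.symm.pos) ENNReal.ofReal_ne_top,
      ENNReal.toReal_ofReal hpq.symm.nonneg]
    refine hwh_int.congr ?_
    filter_upwards [hw, hh] with x hx hhx
    rw [Real.norm_of_nonneg (mul_nonneg (Real.rpow_nonneg hx _) hhx),
      Real.mul_rpow (Real.rpow_nonneg hx _) hhx, hw_pow x hx q hpq.symm.ne_zero]
  have holder := integral_mul_le_Lp_mul_Lq_of_nonneg hpq
    (hw.mono fun x hx => Real.rpow_nonneg hx _)
    (by filter_upwards [hw, hh] with x hx hhx; exact mul_nonneg (Real.rpow_nonneg hx _) hhx)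
    hwp hwq
  calc ∫ x, w x * h x ∂μ = ∫ x, w x ^ (1 / p) * (w x ^ (1 / q) * h x) ∂μ := by
        refine MeasureTheory.integral_congr_ae ?_
        filter_upwards [hw] with x hx
        rw [← mul_assoc, hpq.rpow_one_div_mul_rpow_one_div hx]
    _ ≤ _ := holder
    _ = _ := by
        congr 2
        · refine MeasureTheory.integral_congr_ae ?_
          filter_upwards [hw] with x hx
          exact hw_pow x hx p hpq.ne_zero
        · refine MeasureTheory.integral_congr_ae ?_
          filter_upwards [hw, hh] with x hx hhx
          rw [Real.mul_rpow (Real.rpow_nonneg hx _) hhx, hw_pow x hx q hpq.symm.ne_zero]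

section SymmetricWeight

variable {w : ℝ → ℝ}

theorem integral_mul_affine_of_symm (hw : IntervalIntegrable w volume 0 1)
    (hsymm : ∀ t, w (1 - t) = w t) (A B : ℝ) :
    ∫ t in (0:ℝ)..1, w t * ((1 - t) * A + t * B) = (A + B) / 2 * ∫ t in (0:ℝ)..1, w t := by
  have hwt : IntervalIntegrable (fun t => w t * t) volume 0 1 :=
    hw.mul_continuousOn continuous_id.continuousOn
  have hw1t : IntervalIntegrable (fun t => w t * (1 - t)) volume 0 1 :=
    hw.mul_continuousOn (continuous_const.sub continuous_id).continuousOn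
  have h_reflect : ∫ t in (0:ℝ)..1, w t * (1 - t) = ∫ t in (0:ℝ)..1, w t * t := by
    simpa [hsymm] using integral_comp_sub_left (fun t => w t * t) (1:ℝ) (a := 0) (b := 1)
  have h_sum : ∫ t in (0:ℝ)..1, w t =
      (∫ t in (0:ℝ)..1, w t * (1 - t)) + ∫ t in (0:ℝ)..1, w t * t := by
    rw [← intervalIntegral.integral_add hw1t hwt]
    simp only [← mul_add, sub_add_cancel, mul_one]
  have h_split : ∫ t in (0:ℝ)..1, w t * ((1 - t) * A + t * B) =
      A * (∫ t in (0:ℝ)..1, w t * (1 - t)) + B * ∫ t in (0:ℝ)..1, w t * t := by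
    rw [← intervalIntegral.integral_const_mul, ← intervalIntegral.integral_const_mul,
      ← intervalIntegral.integral_add (hw1t.const_mul A) (hwt.const_mul B)]
    congr 1 with t
    ring
  rw [h_split, h_sum, h_reflect]
  ring

theorem integral_zero_one_eq_two_mul_of_symm (hw : Continuous w)
    (hsymm : ∀ t, w (1 - t) = w t) :
    ∫ t in (0:ℝ)..1, w t = 2 * ∫ t in (0:ℝ)..(1 / 2), w t := by
  have h_reflect : ∫ t in (1 / 2 : ℝ)..1, w t = ∫ t in (0:ℝ)..(1 / 2), w t := by
    have := integral_comp_sub_left w (1:ℝ) (a := 0) (b := 1 / 2)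
    norm_num [hsymm] at this
    norm_num [this]
  rw [← integral_add_adjacent_intervals (b := 1 / 2) (hw.intervalIntegrable _ _)
    (hw.intervalIntegrable _ _), h_reflect, two_mul]

theorem integral_mul_abs_le_of_abs_rpow_le_affine {g : ℝ → ℝ} {q A B : ℝ} (hq : 1 < q)
    (hw : IntervalIntegrable w volume 0 1) (hw_nonneg : ∀ t, 0 ≤ w t)
    (hsymm : ∀ t, w (1 - t) = w t)
    (hg : AEStronglyMeasurable g (volume.restrict (Set.Ioc 0 1)))
    (hg_le : ∀ t ∈ Set.Icc (0:ℝ) 1, |g t| ^ q ≤ (1 - t) * A + t * B) :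
    ∫ t in (0:ℝ)..1, w t * |g t| ≤ (∫ t in (0:ℝ)..1, w t) * ((A + B) / 2) ^ (1 / q) := by
  have hpq : (q / (q - 1)).HolderConjugate q := (Real.HolderConjugate.conjExponent hq).symm
  have hA : 0 ≤ A := by
    simpa using (Real.rpow_nonneg (abs_nonneg (g 0)) q).trans (hg_le 0 (by simp))
  have hB : 0 ≤ B := by
    simpa using (Real.rpow_nonneg (abs_nonneg (g 1)) q).trans (hg_le 1 (by simp))
  have hwg_int : IntervalIntegrable (fun t => w t * |g t| ^ q) volume 0 1 := by
    rw [intervalIntegrable_iff_integrableOn_Ioc_of_le zero_le_one]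
    refine hw.1.mul_bdd (c := A + B) (hg.norm.aemeasurable.pow_const q).aestronglyMeasurable ?_
    filter_upwards [ae_restrict_mem measurableSet_Ioc] with t ht
    rw [Real.norm_of_nonneg (Real.rpow_nonneg (abs_nonneg _) _)]
    exact (hg_le t (Set.Ioc_subset_Icc_self ht)).trans (by nlinarith [ht.1, ht.2])
  have h_moment : ∫ t in (0:ℝ)..1, w t * |g t| ^ q ≤ (A + B) / 2 * ∫ t in (0:ℝ)..1, w t := by
    rw [← integral_mul_affine_of_symm hw hsymm A B]
    refine intervalIntegral.integral_mono_on zero_le_one hwg_int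
      (hw.mul_continuousOn (by fun_prop)) fun t ht => ?_
    exact mul_le_mul_of_nonneg_left (hg_le t ht) (hw_nonneg t)
  have h_holder := integral_mul_le_weighted_Lp hpq (μ := volume.restrict (Set.Ioc 0 1))
    (.of_forall hw_nonneg) (.of_forall fun t => abs_nonneg (g t)) hw.1 hg.norm hwg_int.1
  simp only [← intervalIntegral.integral_of_le zero_le_one] at h_holder
  set S := ∫ t in (0:ℝ)..1, w t
  have hS : 0 ≤ S := intervalIntegral.integral_nonneg zero_le_one fun t _ => hw_nonneg t
  calc ∫ t in (0:ℝ)..1, w t * |g t|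
      ≤ S ^ (1 / (q / (q - 1))) * ((A + B) / 2 * S) ^ (1 / q) := by
        refine h_holder.trans (mul_le_mul_of_nonneg_left ?_ (Real.rpow_nonneg hS _))
        refine Real.rpow_le_rpow (intervalIntegral.integral_nonneg zero_le_one fun t _ =>
          mul_nonneg (hw_nonneg t) (Real.rpow_nonneg (abs_nonneg _) _)) h_moment
          hpq.symm.one_div_nonneg
    _ = (S ^ (1 / (q / (q - 1))) * S ^ (1 / q)) * ((A + B) / 2) ^ (1 / q) := by
        rw [Real.mul_rpow (by positivity) hS]
        ring
    _ = S * ((A + B) / 2) ^ (1 / q) := by rw [hpq.rpow_one_div_mul_rpow_one_div hS]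

end SymmetricWeight

theorem integral_abs_one_sub_rpow_sub_rpow {α : ℝ} (hα : 0 ≤ α) :
    ∫ t in (0:ℝ)..1, |(1 - t) ^ α - t ^ α| = 2 / (α + 1) * (1 - 1 / 2 ^ α) := by
  have hcont : Continuous fun t : ℝ => t ^ α := Real.continuous_rpow_const hα
  have hcont' : Continuous fun t : ℝ => (1 - t) ^ α :=
    hcont.comp (continuous_const.sub continuous_id)
  rw [integral_zero_one_eq_two_mul_of_symm (w := fun t => |(1 - t) ^ α - t ^ α|)
    (hcont'.sub hcont).abs (fun t => by rw [sub_sub_cancel, abs_sub_comm])]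
  have h_abs : ∫ t in (0:ℝ)..(1 / 2), |(1 - t) ^ α - t ^ α| =
      ∫ t in (0:ℝ)..(1 / 2), ((1 - t) ^ α - t ^ α) := by
    refine intervalIntegral.integral_congr fun t ht => abs_of_nonneg (sub_nonneg.mpr ?_)
    rw [Set.uIcc_of_le (by norm_num)] at ht
    exact Real.rpow_le_rpow ht.1 (by linarith [ht.2]) hα
  have h_reflect : ∫ t in (0:ℝ)..(1 / 2), (1 - t) ^ α = ∫ t in (1 / 2 : ℝ)..1, t ^ α := by
    rw [integral_comp_sub_left (fun t : ℝ => t ^ α)]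
    norm_num
  have hα1 : α + 1 ≠ 0 := by linarith
  rw [h_abs, intervalIntegral.integral_sub (hcont'.intervalIntegrable _ _)
    (hcont.intervalIntegrable _ _), h_reflect, integral_rpow (by left; linarith),
    integral_rpow (by left; linarith), Real.zero_rpow hα1, Real.one_rpow,
    Real.rpow_add_one (by norm_num), Real.div_rpow zero_le_one zero_le_two, Real.one_rpow]
  field_simp
  ring

section IntegrationByParts

variable {α : ℝ} {F F' : ℝ → ℝ}

theorem integral_rpow_mul_deriv_s4 (hα : 0 < α) (hF : ContinuousOn F (Set.Icc 0 1))
    (hF' : ∀ t ∈ Set.Ioo (0:ℝ) 1, HasDerivAt F (F' t) t)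
    (hF'_int : IntervalIntegrable F' volume 0 1) :
    ∫ t in (0:ℝ)..1, t ^ α * F' t = F 1 - α * ∫ t in (0:ℝ)..1, t ^ (α - 1) * F t := by
  have hpow : IntervalIntegrable (fun t : ℝ => α * t ^ (α - 1)) volume 0 1 :=
    (intervalIntegrable_rpow' (by linarith)).const_mul α
  rw [integral_mul_deriv_eq_deriv_mul_of_hasDerivAt
      (Real.continuous_rpow_const hα.le).continuousOn (by rwa [Set.uIcc_of_le zero_le_one])
      (fun t ht => Real.hasDerivAt_rpow_const (Or.inl (by simp at ht; linarith [ht.1])))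
      (by simpa using hF') hpow hF'_int,
    Real.one_rpow, Real.zero_rpow hα.ne', ← intervalIntegral.integral_const_mul]
  simp only [mul_assoc, one_mul, zero_mul, sub_zero]

theorem integral_one_sub_rpow_mul_deriv_s4 (hα : 0 < α) (hF : ContinuousOn F (Set.Icc 0 1))
    (hF' : ∀ t ∈ Set.Ioo (0:ℝ) 1, HasDerivAt F (F' t) t)
    (hF'_int : IntervalIntegrable F' volume 0 1) :
    ∫ t in (0:ℝ)..1, (1 - t) ^ α * F' t =
      α * (∫ t in (0:ℝ)..1, (1 - t) ^ (α - 1) * F t) - F 0 := by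
  have h := integral_rpow_mul_deriv_s4 (F := fun t => F (1 - t)) (F' := fun t => -F' (1 - t)) hα
    (hF.comp (continuous_const.sub continuous_id).continuousOn fun t ht => by
      simp only [Set.mem_Icc] at ht ⊢; constructor <;> linarith)
    (fun t ht => HasDerivAt.comp_const_sub 1 t
      (hF' (1 - t) (by simp only [Set.mem_Ioo] at ht ⊢; constructor <;> linarith)))
    (by have := (hF'_int.comp_sub_left 1).symm; norm_num at this; exact this.neg)
  have h_reflect (φ : ℝ → ℝ) : ∫ t in (0:ℝ)..1, φ (1 - t) = ∫ t in (0:ℝ)..1, φ t := by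
    simp [integral_comp_sub_left φ (1:ℝ)]
  simp only [mul_neg, intervalIntegral.integral_neg, sub_self] at h
  rw [← h_reflect (fun t => (1 - t) ^ α * F' t),
    ← h_reflect (fun t => (1 - t) ^ (α - 1) * F t)]
  simp only [sub_sub_cancel]
  linarith

theorem trapezoid_sub_integral_rpow_mul_eq (hα : 0 < α) (hF : ContinuousOn F (Set.Icc 0 1))
    (hF' : ∀ t ∈ Set.Ioo (0:ℝ) 1, HasDerivAt F (F' t) t)
    (hF'_int : IntervalIntegrable F' volume 0 1) :
    (F 0 + F 1) / 2 - α / 2 * ((∫ t in (0:ℝ)..1, (1 - t) ^ (α - 1) * F t) +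
        ∫ t in (0:ℝ)..1, t ^ (α - 1) * F t) =
      1 / 2 * ∫ t in (0:ℝ)..1, (t ^ α - (1 - t) ^ α) * F' t := by
  have hmul (h : ℝ → ℝ) (hh : Continuous h) :
      IntervalIntegrable (fun t => h t * F' t) volume 0 1 :=
    hF'_int.continuousOn_mul hh.continuousOn
  simp only [sub_mul]
  rw [intervalIntegral.integral_sub (hmul _ (Real.continuous_rpow_const hα.le))
      (hmul (fun t => (1 - t) ^ α)
        ((Real.continuous_rpow_const hα.le).comp (continuous_const.sub continuous_id))),
    integral_rpow_mul_deriv_s4 hα hF hF' hF'_int, integral_one_sub_rpow_mul_deriv_s4 hα hF hF' hF'_int]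
  ring

end IntegrationByParts

section Segment

variable {a c : ℝ}

theorem integral_segment_eq_mul_integral_unit (φ : ℝ → ℝ) :
    ∫ s in a..a + c, φ s = c * ∫ t in (0:ℝ)..1, φ (a + t * c) := by
  simp [mul_comm]

theorem IntervalIntegrable.comp_segment {φ : ℝ → ℝ} (hc : c ≠ 0)
    (hφ : IntervalIntegrable φ volume a (a + c)) :
    IntervalIntegrable (fun t => φ (a + t * c)) volume 0 1 := by
  simpa [hc, mul_comm] using (hφ.comp_add_left a).comp_mul_left (c := c)

theorem JL_segment_eq (α : ℝ) (hc : 0 < c) (f : ℝ → ℝ) :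
    JL α a (a + c) f =
      c ^ α / Real.Gamma α * ∫ t in (0:ℝ)..1, (1 - t) ^ (α - 1) * f (a + t * c) := by
  have h_pull : ∫ t in (0:ℝ)..1, (a + c - (a + t * c)) ^ (α - 1) * f (a + t * c) =
      c ^ (α - 1) * ∫ t in (0:ℝ)..1, (1 - t) ^ (α - 1) * f (a + t * c) := by
    rw [← intervalIntegral.integral_const_mul]
    refine intervalIntegral.integral_congr fun t ht => ?_
    rw [Set.uIcc_of_le zero_le_one] at ht
    rw [show a + c - (a + t * c) = c * (1 - t) by ring,
      Real.mul_rpow hc.le (by linarith [ht.2]), mul_assoc]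
  rw [JL, integral_segment_eq_mul_integral_unit, h_pull, Real.rpow_sub_one hc.ne']
  field_simp

theorem JR_segment_eq (α : ℝ) (hc : 0 < c) (f : ℝ → ℝ) :
    JR α a (a + c) f =
      c ^ α / Real.Gamma α * ∫ t in (0:ℝ)..1, t ^ (α - 1) * f (a + t * c) := by
  have h_pull : ∫ t in (0:ℝ)..1, (a + t * c - a) ^ (α - 1) * f (a + t * c) =
      c ^ (α - 1) * ∫ t in (0:ℝ)..1, t ^ (α - 1) * f (a + t * c) := by
    rw [← intervalIntegral.integral_const_mul]
    refine intervalIntegral.integral_congr fun t ht => ?_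
    rw [Set.uIcc_of_le zero_le_one] at ht
    rw [show a + t * c - a = c * t by ring, Real.mul_rpow hc.le ht.1, mul_assoc]
  rw [JR, integral_segment_eq_mul_integral_unit, h_pull, Real.rpow_sub_one hc.ne']
  field_simp

theorem trapezoid_sub_JL_add_JR_eq {α : ℝ} {f : ℝ → ℝ} (hα : 0 < α) (hc : 0 < c)
    (hf : ∀ t ∈ Set.Icc (0:ℝ) 1, DifferentiableAt ℝ f (a + t * c))
    (hf' : IntervalIntegrable (deriv f) volume a (a + c)) :
    (f a + f (a + c)) / 2 -
        Real.Gamma (α + 1) / (2 * c ^ α) * (JL α a (a + c) f + JR α a (a + c) f) =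
      c / 2 * ∫ t in (0:ℝ)..1, (t ^ α - (1 - t) ^ α) * deriv f (a + t * c) := by
  have hF' (t : ℝ) (ht : t ∈ Set.Icc (0:ℝ) 1) :
      HasDerivAt (fun s => f (a + s * c)) (deriv f (a + t * c) * c) t :=
    (hf t ht).hasDerivAt.comp t (((hasDerivAt_id t).mul_const c).const_add a |>.congr_deriv
      (one_mul c))
  have h_unit := trapezoid_sub_integral_rpow_mul_eq hα
    (fun t ht => (hF' t ht).continuousAt.continuousWithinAt)
    (fun t ht => hF' t (Set.Ioo_subset_Icc_self ht)) ((hf'.comp_segment hc.ne').mul_const c)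
  simp only [zero_mul, add_zero, one_mul] at h_unit
  have hΓ := Real.Gamma_pos_of_pos hα
  have hcα := Real.rpow_pos_of_pos hc α
  rw [JL_segment_eq α hc, JR_segment_eq α hc, Real.Gamma_add_one hα.ne']
  calc _ = (f a + f (a + c)) / 2 -
        α / 2 * ((∫ t in (0:ℝ)..1, (1 - t) ^ (α - 1) * f (a + t * c)) +
          ∫ t in (0:ℝ)..1, t ^ (α - 1) * f (a + t * c)) := by field_simp
    _ = _ := h_unit
    _ = _ := by
      simp only [← mul_assoc, intervalIntegral.integral_mul_const]
      ring

end Segment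

theorem fractional_estimate_power_mean_preinvex_general
    (A : Set ℝ) (η : ℝ → ℝ → ℝ) (a b : ℝ) (f : ℝ → ℝ) (α q : ℝ)
    (hinv : InvexSet A η) (ha : a ∈ A) (hb : b ∈ A)
    (hab : a < a + η b a)
    (hdiff : ∀ x ∈ A, DifferentiableAt ℝ f x)
    (hint : IntervalIntegrable (deriv f) volume a (a + η b a))
    (hq : 1 < q)
    (hpre : PreinvexOn A η (fun x => |deriv f x| ^ q))
    (hα : 0 < α) :
    |(f a + f (a + η b a)) / 2 -
        Real.Gamma (α + 1) / (2 * (η b a) ^ α) *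
          (JL α a (a + η b a) f + JR α a (a + η b a) f)| ≤
      η b a / (α + 1) * (1 - 1 / 2 ^ α) *
        ((|deriv f a| ^ q + |deriv f b| ^ q) / 2) ^ (1 / q) := by
  set c := η b a
  have hc : 0 < c := by linarith
  have hseg : ∀ t ∈ Set.Icc (0:ℝ) 1, a + t * c ∈ A := hinv a ha b hb
  have hw : Continuous fun t : ℝ => |(1 - t) ^ α - t ^ α| := by
    have := Real.continuous_rpow_const hα.le
    fun_prop
  have h_bound := integral_mul_abs_le_of_abs_rpow_le_affine hq (hw.intervalIntegrable 0 1)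
    (fun t => abs_nonneg _) (fun t => by rw [sub_sub_cancel, abs_sub_comm])
    ((measurable_deriv f).comp (by fun_prop)).aestronglyMeasurable (hpre a ha b hb)
  rw [integral_abs_one_sub_rpow_sub_rpow hα.le] at h_bound
  rw [trapezoid_sub_JL_add_JR_eq hα hc (fun t ht => hdiff _ (hseg t ht)) hint, abs_mul,
    abs_of_pos (half_pos hc)]
  calc c / 2 * |∫ t in (0:ℝ)..1, (t ^ α - (1 - t) ^ α) * deriv f (a + t * c)|
      ≤ c / 2 * ∫ t in (0:ℝ)..1, |(1 - t) ^ α - t ^ α| * |deriv f (a + t * c)| := by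
        gcongr
        refine (intervalIntegral.abs_integral_le_integral_abs zero_le_one).trans_eq ?_
        congr 1 with t
        rw [abs_mul, abs_sub_comm]
    _ ≤ c / 2 * (2 / (α + 1) * (1 - 1 / 2 ^ α) *
          ((|deriv f a| ^ q + |deriv f b| ^ q) / 2) ^ (1 / q)) := by gcongr; exact h_bound
    _ = _ := by ring

theorem fractional_estimate_power_mean_preinvex
    (A : Set ℝ) (η : ℝ → ℝ → ℝ) (a b : ℝ) (f : ℝ → ℝ) (α q : ℝ)
    (hA : IsOpen A) (hinv : InvexSet A η) (ha : a ∈ A) (hb : b ∈ A)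
    (hab : a < a + η b a)
    (hdiff : ∀ x ∈ A, DifferentiableAt ℝ f x)
    (hint : IntervalIntegrable (deriv f) volume a (a + η b a))
    (hq : 1 < q)
    (hpre : PreinvexOn A η (fun x => |deriv f x| ^ q))
    (hα : 0 < α) :
    |(f a + f (a + η b a)) / 2 -
        Real.Gamma (α + 1) / (2 * (η b a) ^ α) *
          (JL α a (a + η b a) f + JR α a (a + η b a) f)| ≤
      η b a / (α + 1) * (1 - 1 / 2 ^ α) *
        ((|deriv f a| ^ q + |deriv f b| ^ q) / 2) ^ (1 / q) :=
  fractional_estimate_power_mean_preinvex_general A η a b f α q hinv ha hb hab hdiff hint hq hpre hα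
end

section
/- Let A ⊆ ℝ be an invex set with respect to η : A × A → ℝ satisfying Condition C. Then for all x, y ∈ A and all t₁, t₂ ∈ [0,1], η(y + t₂·η(x,y), y + t₁·η(x,y)) = (t₂ − t₁)·η(x,y). -/
open MeasureTheory intervalIntegral

theorem condC_extended
    (A : Set ℝ) (η : ℝ → ℝ → ℝ)
    (hinv : InvexSet A η) (hC : CondC A η) :
    ∀ x ∈ A, ∀ y ∈ A, ∀ t₁ ∈ Set.Icc (0:ℝ) 1, ∀ t₂ ∈ Set.Icc (0:ℝ) 1,
      η (y + t₂ * η x y) (y + t₁ * η x y) = (t₂ - t₁) * η x y := by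
  intro x hx y hy t₁ ht₁ t₂ ht₂
  obtain ⟨h10, h11⟩ := ht₁
  obtain ⟨h20, h21⟩ := ht₂
  have hz₂ : y + t₂ * η x y ∈ A := hinv y hy x hx t₂ ⟨h20, h21⟩
  set z₂ := y + t₂ * η x y with hz₂def
  rcases le_or_gt t₁ t₂ with hle | hlt
  · rcases eq_or_lt_of_le h20 with h0 | h0
    · -- t₂ = 0, hence t₁ = 0
      have ht1 : t₁ = 0 := le_antisymm (hle.trans h0.symm.le) h10
      rw [hz₂def, ht1, ← h0]
      simpa using (hC x hx y hy 0 ⟨le_refl 0, zero_le_one⟩).1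
    · set s := (t₂ - t₁) / t₂ with hs
      have hs0 : 0 ≤ s := div_nonneg (by linarith) h0.le
      have hs1 : s ≤ 1 := by
        rw [div_le_one h0]; linarith
      have hst : s * t₂ = t₂ - t₁ := div_mul_cancel₀ _ (ne_of_gt h0)
      have hηyz : η y z₂ = -t₂ * η x y := (hC x hx y hy t₂ ⟨h20, h21⟩).1
      have key := (hC y hy z₂ hz₂ s ⟨hs0, hs1⟩).1
      rw [hηyz] at key
      have harg : z₂ + s * (-t₂ * η x y) = y + t₁ * η x y := by
        rw [hz₂def]; linear_combination (-(η x y)) * hst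
      rw [harg] at key
      rw [key]
      linear_combination (η x y) * hst
  · -- t₂ < t₁ ≤ 1, so t₂ < 1
    have h2lt1 : t₂ < 1 := lt_of_lt_of_le hlt h11
    set s := (t₁ - t₂) / (1 - t₂) with hs
    have hden : (0:ℝ) < 1 - t₂ := by linarith
    have hs0 : 0 ≤ s := div_nonneg (by linarith) hden.le
    have hs1 : s ≤ 1 := by rw [div_le_one hden]; linarith
    have hηxz : η x z₂ = (1 - t₂) * η x y := (hC x hx y hy t₂ ⟨h20, h21⟩).2
    have key := (hC x hx z₂ hz₂ s ⟨hs0, hs1⟩).1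
    rw [hηxz] at key
    have hmul : s * (1 - t₂) = t₁ - t₂ := div_mul_cancel₀ _ (ne_of_gt hden)
    have harg : z₂ + s * ((1 - t₂) * η x y) = y + t₁ * η x y := by
      rw [hz₂def]; linear_combination (η x y) * hmul
    rw [harg] at key
    rw [key]
    linear_combination (-(η x y)) * hmul
end

section
/- Let A ⊆ ℝ be an invex set with respect to η satisfying Condition C, and let f be preinvex with respect to η on A. Then for every a, b ∈ A and every t ∈ [0,1], f(a + t·η(b,a)) ≤ t·f(a + η(b,a)) + (1−t)·f(a). -/
open MeasureTheory intervalIntegral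

theorem preinvex_reverse_combination
    (A : Set ℝ) (η : ℝ → ℝ → ℝ) (f : ℝ → ℝ)
    (hinv : InvexSet A η) (hC : CondC A η) (hpre : PreinvexOn A η f) :
    ∀ a ∈ A, ∀ b ∈ A, ∀ t ∈ Set.Icc (0:ℝ) 1,
      f (a + t * η b a) ≤ t * f (a + η b a) + (1 - t) * f a := by
  intro a ha b hb t ht
  obtain ⟨ht0, ht1⟩ := ht
  have h1 : (1:ℝ) ∈ Set.Icc (0:ℝ) 1 := by norm_num
  have hc : a + η b a ∈ A := by
    have := hinv a ha b hb 1 h1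
    simpa using this
  have hη : η a (a + η b a) = - η b a := by
    have := (hC b hb a ha 1 h1).1
    simpa using this
  have hs : (1 - t) ∈ Set.Icc (0:ℝ) 1 := ⟨by linarith, by linarith⟩
  have := hpre (a + η b a) hc a ha (1 - t) hs
  rw [hη] at this
  have heq : a + η b a + (1 - t) * -η b a = a + t * η b a := by ring
  rw [heq] at this
  linarith
end

section
/- Let A ⊆ ℝ be an invex set with respect to η satisfying Condition C, and let f be preinvex with respect to η on A. Then for every a, b ∈ A and every t ∈ [0,1], f(a + t·η(b,a)) + f(a + (1−t)·η(b,a)) ≤ f(a) + f(a + η(b,a)). -/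
open MeasureTheory intervalIntegral

theorem preinvex_sum_bound
    (A : Set ℝ) (η : ℝ → ℝ → ℝ) (f : ℝ → ℝ)
    (hinv : InvexSet A η) (hC : CondC A η) (hpre : PreinvexOn A η f) :
    ∀ a ∈ A, ∀ b ∈ A, ∀ t ∈ Set.Icc (0:ℝ) 1,
      f (a + t * η b a) + f (a + (1 - t) * η b a) ≤ f a + f (a + η b a) := by
  intro a ha b hb t ht
  obtain ⟨ht0, ht1⟩ := ht
  have h1 : (1:ℝ) ∈ Set.Icc (0:ℝ) 1 := by norm_num
  have hu : a + η b a ∈ A := by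
    have := hinv a ha b hb 1 h1
    simpa using this
  have hηa : η a (a + η b a) = -η b a := by
    have := (hC b hb a ha 1 h1).1
    simpa using this
  -- key lemma: for r ∈ [0,1], f (a + (1-r) * η b a) ≤ (1-r) * f (a + η b a) + r * f a
  have key : ∀ r ∈ Set.Icc (0:ℝ) 1,
      f (a + (1 - r) * η b a) ≤ (1 - r) * f (a + η b a) + r * f a := by
    intro r hr
    have := hpre (a + η b a) hu a ha r hr
    rw [hηa] at this
    have heq : a + η b a + r * -η b a = a + (1 - r) * η b a := by ring
    rwa [heq] at this
  have k1 := key t ⟨ht0, ht1⟩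
  have k2 := key (1 - t) ⟨by linarith, by linarith⟩
  have : (1 - (1 - t)) = t := by ring
  rw [this] at k2
  linarith
end

section
/- Let A ⊆ ℝ be an invex set with respect to η satisfying Condition C, and let f be preinvex with respect to η on A. Then for all a, b ∈ A and t ∈ [0,1], 2 f((2a + η(b,a))/2) ≤ f(a + (1−t)·η(b,a)) + f(a + t·η(b,a)). -/
open MeasureTheory intervalIntegral

/-! Condition C says that `η` measures signed displacement along each `η`-segment: writing
`x s := a + s * η b a`, one has `η (x s) (x t) = (s - t) * η b a`. So the `η`-midpoint of
`x (1 - t)` and `x t` is `x (1 / 2) = (2 * a + η b a) / 2`, and preinvexity with weight `1 / 2`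
gives the bound. -/

lemma exists_mem_Icc_mul_eq {u v : ℝ} (hu : 0 ≤ u) (huv : u ≤ v) :
    ∃ r ∈ Set.Icc (0 : ℝ) 1, r * v = u := by
  rcases (hu.trans huv).eq_or_lt with hv | hv
  · exact ⟨0, Set.left_mem_Icc.2 zero_le_one, by rw [zero_mul]; linarith⟩
  · exact ⟨u / v, ⟨div_nonneg hu hv.le, (div_le_one hv).2 huv⟩, div_mul_cancel₀ u hv.ne'⟩

namespace CondC

variable {A : Set ℝ} {η : ℝ → ℝ → ℝ} {a b s t : ℝ}

lemma eta_segment_of_le (hinv : InvexSet A η) (hC : CondC A η) (ha : a ∈ A) (hb : b ∈ A)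
    (hs : 0 ≤ s) (hst : s ≤ t) (ht : t ≤ 1) :
    η (a + s * η b a) (a + t * η b a) = (s - t) * η b a := by
  have hsI : s ∈ Set.Icc (0 : ℝ) 1 := ⟨hs, hst.trans ht⟩
  have hz := hinv a ha b hb s hsI
  -- `x t` lies on the `η`-segment from `x s` to `b`.
  have hbz : η b (a + s * η b a) = (1 - s) * η b a := (hC b hb a ha s hsI).2
  obtain ⟨r, hr, hrs⟩ := exists_mem_Icc_mul_eq (sub_nonneg.2 hst) (sub_le_sub_right ht s)
  have key := (hC b hb _ hz r hr).1
  rw [hbz] at key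
  have hpt : a + s * η b a + r * ((1 - s) * η b a) = a + t * η b a := by
    linear_combination η b a * hrs
  rw [← hpt, key]
  linear_combination -(η b a) * hrs

lemma eta_segment_of_ge (hinv : InvexSet A η) (hC : CondC A η) (ha : a ∈ A) (hb : b ∈ A)
    (ht : 0 ≤ t) (hts : t ≤ s) (hs : s ≤ 1) :
    η (a + s * η b a) (a + t * η b a) = (s - t) * η b a := by
  have hsI : s ∈ Set.Icc (0 : ℝ) 1 := ⟨ht.trans hts, hs⟩
  have hz := hinv a ha b hb s hsI
  -- `x t` lies on the `η`-segment from `x s` to `a`.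
  have haz : η a (a + s * η b a) = -s * η b a := (hC b hb a ha s hsI).1
  obtain ⟨r, hr, hrs⟩ := exists_mem_Icc_mul_eq (sub_nonneg.2 hts) (sub_le_self s ht)
  have key := (hC a ha _ hz r hr).1
  rw [haz] at key
  have hpt : a + s * η b a + r * (-s * η b a) = a + t * η b a := by
    linear_combination -(η b a) * hrs
  rw [← hpt, key]
  linear_combination η b a * hrs

lemma eta_segment (hinv : InvexSet A η) (hC : CondC A η) (ha : a ∈ A) (hb : b ∈ A)
    (hs : s ∈ Set.Icc (0 : ℝ) 1) (ht : t ∈ Set.Icc (0 : ℝ) 1) :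
    η (a + s * η b a) (a + t * η b a) = (s - t) * η b a := by
  rcases le_total s t with hst | hts
  · exact hC.eta_segment_of_le hinv ha hb hs.1 hst ht.2
  · exact hC.eta_segment_of_ge hinv ha hb ht.1 hts hs.2

end CondC

theorem preinvex_midpoint_bound
    (A : Set ℝ) (η : ℝ → ℝ → ℝ) (f : ℝ → ℝ)
    (hinv : InvexSet A η) (hC : CondC A η) (hpre : PreinvexOn A η f) :
    ∀ a ∈ A, ∀ b ∈ A, ∀ t ∈ Set.Icc (0:ℝ) 1,
      2 * f ((2 * a + η b a) / 2) ≤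
        f (a + (1 - t) * η b a) + f (a + t * η b a) := by
  intro a ha b hb t ht
  have ht' : 1 - t ∈ Set.Icc (0 : ℝ) 1 := ⟨by linarith [ht.2], by linarith [ht.1]⟩
  have hmid := hpre _ (hinv a ha b hb _ ht') _ (hinv a ha b hb t ht) (1 / 2) (by norm_num)
  rw [hC.eta_segment hinv ha hb ht ht'] at hmid
  have hpt : a + (1 - t) * η b a + 1 / 2 * ((t - (1 - t)) * η b a) = (2 * a + η b a) / 2 := by
    ring
  rw [hpt] at hmid
  linarith
end

section
/- Let f : [a,b] → ℝ be a positive convex integrable function with 0 ≤ a < b and α > 0. Then f((a+b)/2) ≤ (Γ(α+1)/(2(b−a)^α)) [J_{a+}^α f(b) + J_{b−}^α f(a)] ≤ (f(a)+f(b))/2. -/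
/-!
Reflecting by `t ↦ a + b - t` turns `JL α a b f + JR α a b f` into
`Γ(α)⁻¹ ∫_a^b (t - a)^(α-1) (f t + f (a + b - t)) dt`. On `[a, b]` convexity squeezes the
symmetrised integrand, `2 f ((a + b) / 2) ≤ f t + f (a + b - t) ≤ f a + f b`, and integrating
against the weight `(t - a)^(α-1)`, of total mass `(b - a)^α / α`, gives both inequalities.
A convex function on `[a, b]` is bounded, so the weighted integrals converge even for `α < 1`.
-/

open MeasureTheory intervalIntegral

open Set

section Convex

variable {a b : ℝ} {f : ℝ → ℝ}

theorem reflect_mem_Icc {x : ℝ} (hx : x ∈ Icc a b) : a + b - x ∈ Icc a b :=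
  ⟨by linarith [hx.2], by linarith [hx.1]⟩

theorem ConvexOn.le_chord (hf : ConvexOn ℝ (Icc a b) f) (hab : a < b) {x : ℝ}
    (hx : x ∈ Icc a b) : f x ≤ ((b - x) * f a + (x - a) * f b) / (b - a) := by
  have hba : 0 < b - a := sub_pos.2 hab
  have h := hf.2 (left_mem_Icc.2 hab.le) (right_mem_Icc.2 hab.le)
    (div_nonneg (sub_nonneg.2 hx.2) hba.le) (div_nonneg (sub_nonneg.2 hx.1) hba.le)
    (by field_simp; ring)
  have hcomb : (b - x) / (b - a) * a + (x - a) / (b - a) * b = x := by field_simp; ring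
  simp only [smul_eq_mul, hcomb] at h
  rwa [add_div, mul_div_right_comm, mul_div_right_comm (x - a)]

theorem ConvexOn.add_reflect_le (hf : ConvexOn ℝ (Icc a b) f) (hab : a < b) {x : ℝ}
    (hx : x ∈ Icc a b) : f x + f (a + b - x) ≤ f a + f b := by
  have h₁ := hf.le_chord hab hx
  have h₂ := hf.le_chord hab (reflect_mem_Icc hx)
  have hsum : ((b - x) * f a + (x - a) * f b) / (b - a)
      + ((b - (a + b - x)) * f a + (a + b - x - a) * f b) / (b - a) = f a + f b := by
    field_simp [(sub_pos.2 hab).ne']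
    ring
  linarith

theorem ConvexOn.two_mul_le_add_reflect (hf : ConvexOn ℝ (Icc a b) f) {x : ℝ}
    (hx : x ∈ Icc a b) : 2 * f ((a + b) / 2) ≤ f x + f (a + b - x) := by
  have h := hf.2 hx (reflect_mem_Icc hx) (by norm_num : (0 : ℝ) ≤ 1 / 2)
    (by norm_num : (0 : ℝ) ≤ 1 / 2) (by norm_num)
  rw [smul_eq_mul, smul_eq_mul, smul_eq_mul, smul_eq_mul,
    show 1 / 2 * x + 1 / 2 * (a + b - x) = (a + b) / 2 by ring] at h
  linarith

theorem ConvexOn.exists_abs_le_of_Icc (hf : ConvexOn ℝ (Icc a b) f) (hab : a ≤ b) :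
    ∃ C, ∀ x ∈ Icc a b, |f x| ≤ C := by
  have hle_max : ∀ x ∈ Icc a b, f x ≤ max (f a) (f b) := fun x hx =>
    hf.le_on_segment (left_mem_Icc.2 hab) (right_mem_Icc.2 hab) (by rwa [segment_eq_Icc hab])
  refine ⟨max (max (f a) (f b)) (max (f a) (f b) - 2 * f ((a + b) / 2)),
    fun x hx => abs_le'.2 ⟨le_max_of_le_left (hle_max x hx), le_max_of_le_right ?_⟩⟩
  linarith [hf.two_mul_le_add_reflect hx, hle_max _ (reflect_mem_Icc hx)]

end Convex

section Integral

variable {a b : ℝ}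

theorem IntervalIntegrable.mul_of_abs_le {μ : Measure ℝ}
    {w f : ℝ → ℝ} {C : ℝ} (hab : a ≤ b)
    (hw : IntervalIntegrable w μ a b) (hf : IntervalIntegrable f μ a b)
    (hC : ∀ x ∈ Icc a b, |f x| ≤ C) : IntervalIntegrable (fun t => w t * f t) μ a b := by
  rw [intervalIntegrable_iff_integrableOn_Ioc_of_le hab] at hw hf ⊢
  exact hw.mul_bdd hf.aestronglyMeasurable
    ((ae_restrict_iff' measurableSet_Ioc).2 (ae_of_all _ fun x hx => hC x (Ioc_subset_Icc_self hx)))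

theorem IntervalIntegrable.comp_reflect {f : ℝ → ℝ} (hf : IntervalIntegrable f volume a b) :
    IntervalIntegrable (fun t => f (a + b - t)) volume a b := by
  simpa using (hf.comp_sub_left (a + b)).symm

theorem intervalIntegrable_sub_rpow {α : ℝ} (hα : 0 < α) :
    IntervalIntegrable (fun t => (t - a) ^ (α - 1)) volume a b := by
  simpa using (intervalIntegral.intervalIntegrable_rpow' (a := 0) (b := b - a)
    (r := α - 1) (by linarith)).comp_sub_right a

theorem integral_sub_rpow {α : ℝ} (hα : 0 < α) :
    ∫ t in a..b, (t - a) ^ (α - 1) = (b - a) ^ α / α := by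
  rw [intervalIntegral.integral_comp_sub_right (fun x => x ^ (α - 1)), sub_self,
    integral_rpow (Or.inl (by linarith)), sub_add_cancel, Real.zero_rpow hα.ne']
  ring

theorem mul_integral_le_integral_mul {w g : ℝ → ℝ} {m : ℝ} (hab : a ≤ b)
    (hw : IntervalIntegrable w volume a b) (hwg : IntervalIntegrable (fun t => w t * g t) volume a b)
    (hw₀ : ∀ t ∈ Icc a b, 0 ≤ w t) (hm : ∀ t ∈ Icc a b, m ≤ g t) :
    m * ∫ t in a..b, w t ≤ ∫ t in a..b, w t * g t := by
  rw [← intervalIntegral.integral_const_mul]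
  exact intervalIntegral.integral_mono_on hab (hw.const_mul m) hwg fun t ht => by
    rw [mul_comm]; exact mul_le_mul_of_nonneg_left (hm t ht) (hw₀ t ht)

theorem integral_mul_le_mul_integral {w g : ℝ → ℝ} {M : ℝ} (hab : a ≤ b)
    (hw : IntervalIntegrable w volume a b) (hwg : IntervalIntegrable (fun t => w t * g t) volume a b)
    (hw₀ : ∀ t ∈ Icc a b, 0 ≤ w t) (hM : ∀ t ∈ Icc a b, g t ≤ M) :
    ∫ t in a..b, w t * g t ≤ M * ∫ t in a..b, w t := by
  rw [← intervalIntegral.integral_const_mul]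
  exact intervalIntegral.integral_mono_on hab hwg (hw.const_mul M) fun t ht => by
    rw [mul_comm M]; exact mul_le_mul_of_nonneg_left (hM t ht) (hw₀ t ht)

end Integral

theorem JL_add_JR_eq {α a b : ℝ} {f : ℝ → ℝ}
    (hl : IntervalIntegrable (fun t => (t - a) ^ (α - 1) * f t) volume a b)
    (hr : IntervalIntegrable (fun t => (t - a) ^ (α - 1) * f (a + b - t)) volume a b) :
    JL α a b f + JR α a b f =
      (Real.Gamma α)⁻¹ * ∫ t in a..b, (t - a) ^ (α - 1) * (f t + f (a + b - t)) := by
  have hreflect : ∫ t in a..b, (b - t) ^ (α - 1) * f t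
      = ∫ t in a..b, (t - a) ^ (α - 1) * f (a + b - t) := by
    simpa [show ∀ t, b - (a + b - t) = t - a by intros; ring] using
      (intervalIntegral.integral_comp_sub_left (a := a) (b := b)
        (fun t => (b - t) ^ (α - 1) * f t) (a + b)).symm
  simp only [JL, JR, mul_add, hreflect, intervalIntegral.integral_add hl hr]
  ring

theorem hermite_hadamard_convex_fractional_general (a b : ℝ) (f : ℝ → ℝ) (α : ℝ)
    (hab : a < b)
    (hconv : ConvexOn ℝ (Set.Icc a b) f)
    (hint : IntervalIntegrable f volume a b)
    (hα : 0 < α) :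
    f ((a + b) / 2) ≤
        Real.Gamma (α + 1) / (2 * (b - a) ^ α) * (JL α a b f + JR α a b f) ∧
      Real.Gamma (α + 1) / (2 * (b - a) ^ α) * (JL α a b f + JR α a b f) ≤
        (f a + f b) / 2 := by
  obtain ⟨C, hC⟩ := hconv.exists_abs_le_of_Icc hab.le
  have hw := intervalIntegrable_sub_rpow (a := a) (b := b) hα
  have hw₀ : ∀ t ∈ Icc a b, 0 ≤ (t - a) ^ (α - 1) := fun t ht =>
    Real.rpow_nonneg (sub_nonneg.2 ht.1) _
  have hl := hw.mul_of_abs_le hab.le hint hC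
  have hr := hw.mul_of_abs_le hab.le hint.comp_reflect fun t ht => hC _ (reflect_mem_Icc ht)
  have hsum : IntervalIntegrable (fun t => (t - a) ^ (α - 1) * (f t + f (a + b - t))) volume a b :=
    by simpa only [mul_add] using hl.add hr
  have hmean : Real.Gamma (α + 1) / (2 * (b - a) ^ α) * (JL α a b f + JR α a b f) =
      (∫ t in a..b, (t - a) ^ (α - 1) * (f t + f (a + b - t))) / (2 * ((b - a) ^ α / α)) := by
    rw [JL_add_JR_eq hl hr, Real.Gamma_add_one hα.ne']
    field_simp [(Real.Gamma_pos_of_pos hα).ne']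
  have hlow := mul_integral_le_integral_mul hab.le hw hsum hw₀ fun t ht =>
    hconv.two_mul_le_add_reflect ht
  have hhigh := integral_mul_le_mul_integral hab.le hw hsum hw₀ fun t ht =>
    hconv.add_reflect_le hab ht
  rw [integral_sub_rpow hα] at hlow hhigh
  rw [hmean, le_div_iff₀ (by positivity), div_le_iff₀ (by positivity)]
  constructor <;> linarith

theorem hermite_hadamard_convex_fractional (a b : ℝ) (f : ℝ → ℝ) (α : ℝ)
    (ha : 0 ≤ a) (hab : a < b)
    (hpos : ∀ x ∈ Set.Icc a b, 0 < f x)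
    (hconv : ConvexOn ℝ (Set.Icc a b) f)
    (hint : IntervalIntegrable f volume a b)
    (hα : 0 < α) :
    f ((a + b) / 2) ≤
        Real.Gamma (α + 1) / (2 * (b - a) ^ α) * (JL α a b f + JR α a b f) ∧
      Real.Gamma (α + 1) / (2 * (b - a) ^ α) * (JL α a b f + JR α a b f) ≤
        (f a + f b) / 2 :=
  hermite_hadamard_convex_fractional_general a b f α hab hconv hint hα
end

section
/- Let A ⊆ ℝ be an open invex set with respect to η and a, b ∈ A with η(b,a) ≠ 0 and a < a + η(b,a). If f : A → ℝ is differentiable, f′ integrable on [a, a+η(b,a)], and |f′| is preinvex on A, then |(f(a)+f(a+η(b,a)))/2 − (1/η(b,a)) ∫_a^{a+η(b,a)} f(x) dx| ≤ (|η(b,a)|/8)(|f′(a)| + |f′(b)|). -/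
open MeasureTheory intervalIntegral

/-!
Integration by parts against the kernel `t - 1/2` gives
`(f a + f (a + h)) / 2 - (1/h) ∫_a^{a+h} f = h ∫₀¹ (t - 1/2) f'(a + t h) dt` with `h = η b a`.
Preinvexity of `|f'|` bounds `|f'(a + t h)|` by `(1 - t) |f'(a)| + t |f'(b)|`, and
`∫₀¹ |t - 1/2| ((1 - t) P + t Q) dt = (P + Q) / 8`. Invexity keeps `[a, a + h]` inside `A`,
where `f` is differentiable.
-/

theorem InvexSet.uIcc_subset {A : Set ℝ} {η : ℝ → ℝ → ℝ} (h : InvexSet A η) {x y : ℝ}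
    (hx : x ∈ A) (hy : y ∈ A) : Set.uIcc x (x + η y x) ⊆ A := by
  rw [← segment_eq_uIcc, segment_eq_image']
  rintro _ ⟨t, ht, rfl⟩
  simpa using h x hx y hy t ht

theorem integral_quadratic (c₀ c₁ c₂ p q : ℝ) :
    ∫ t in p..q, (c₀ + c₁ * t + c₂ * t ^ 2) =
      (c₀ * q + c₁ * q ^ 2 / 2 + c₂ * q ^ 3 / 3) - (c₀ * p + c₁ * p ^ 2 / 2 + c₂ * p ^ 3 / 3) := by
  refine integral_eq_sub_of_hasDerivAt (f := fun t ↦ c₀ * t + c₁ * t ^ 2 / 2 + c₂ * t ^ 3 / 3)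
    (fun t _ ↦ ?_)
    ((by fun_prop : Continuous fun t : ℝ ↦ c₀ + c₁ * t + c₂ * t ^ 2).intervalIntegrable _ _)
  refine ((((hasDerivAt_id t).const_mul c₀).add
    (((hasDerivAt_pow 2 t).const_mul c₁).div_const 2)).add
    (((hasDerivAt_pow 3 t).const_mul c₂).div_const 3)).congr_deriv ?_
  norm_num
  ring

theorem integral_abs_sub_half_mul_affine (P Q : ℝ) :
    ∫ t in (0:ℝ)..1, |t - 1 / 2| * ((1 - t) * P + t * Q) = (P + Q) / 8 := by
  have hcont : Continuous fun t : ℝ ↦ |t - 1 / 2| * ((1 - t) * P + t * Q) := by fun_prop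
  have left : ∫ t in (0:ℝ)..1 / 2, |t - 1 / 2| * ((1 - t) * P + t * Q) =
      ∫ t in (0:ℝ)..1 / 2, (P / 2 + (Q / 2 - 3 * P / 2) * t + (P - Q) * t ^ 2) := by
    refine integral_congr fun t ht ↦ ?_
    rw [Set.uIcc_of_le (by norm_num)] at ht
    simp only [abs_of_nonpos (by linarith [ht.2] : t - 1 / 2 ≤ 0)]
    ring
  have right : ∫ t in (1 / 2 : ℝ)..1, |t - 1 / 2| * ((1 - t) * P + t * Q) =
      ∫ t in (1 / 2 : ℝ)..1, (-P / 2 + (3 * P / 2 - Q / 2) * t + (Q - P) * t ^ 2) := by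
    refine integral_congr fun t ht ↦ ?_
    rw [Set.uIcc_of_le (by norm_num)] at ht
    simp only [abs_of_nonneg (by linarith [ht.1] : 0 ≤ t - 1 / 2)]
    ring
  rw [← integral_add_adjacent_intervals (hcont.intervalIntegrable 0 (1 / 2))
    (hcont.intervalIntegrable _ 1), left, right, integral_quadratic, integral_quadratic]
  ring

theorem abs_integral_sub_half_mul_le {φ : ℝ → ℝ} {P Q : ℝ}
    (hφ : ∀ t ∈ Set.Icc (0:ℝ) 1, |φ t| ≤ (1 - t) * P + t * Q) :
    |∫ t in (0:ℝ)..1, (t - 1 / 2) * φ t| ≤ (P + Q) / 8 := by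
  rw [← integral_abs_sub_half_mul_affine]
  refine (Real.norm_eq_abs _).ge.trans <|
    norm_integral_le_of_norm_le zero_le_one (Filter.Eventually.of_forall fun t ht ↦ ?_)
    ((by fun_prop : Continuous fun t : ℝ ↦ |t - 1 / 2| * ((1 - t) * P + t * Q)).intervalIntegrable
      _ _)
  rw [Real.norm_eq_abs, abs_mul]
  exact mul_le_mul_of_nonneg_left (hφ t (Set.Ioc_subset_Icc_self ht)) (abs_nonneg _)

theorem integral_sub_midpoint_mul_deriv {f f' : ℝ → ℝ} {a b : ℝ}
    (hf : ∀ x ∈ Set.uIcc a b, HasDerivAt f (f' x) x) (hf' : IntervalIntegrable f' volume a b) :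
    ∫ x in a..b, (x - (a + b) / 2) * f' x = (b - a) / 2 * (f a + f b) - ∫ x in a..b, f x := by
  rw [integral_mul_deriv_eq_deriv_mul (fun x _ ↦ (hasDerivAt_id' x).sub_const _) hf
    intervalIntegrable_const hf']
  simp only [one_mul]
  ring

theorem trapezoid_sub_average_eq {f f' : ℝ → ℝ} {a h : ℝ} (hh : h ≠ 0)
    (hf : ∀ x ∈ Set.uIcc a (a + h), HasDerivAt f (f' x) x)
    (hf' : IntervalIntegrable f' volume a (a + h)) :
    (f a + f (a + h)) / 2 - 1 / h * ∫ x in a..a + h, f x =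
      h * ∫ t in (0:ℝ)..1, (t - 1 / 2) * f' (a + t * h) := by
  set g : ℝ → ℝ := fun x ↦ (x - (a + (a + h)) / 2) * f' x
  have hsub : h * ∫ t in (0:ℝ)..1, (t - 1 / 2) * f' (a + t * h) = h⁻¹ * ∫ x in a..a + h, g x :=
    calc h * ∫ t in (0:ℝ)..1, (t - 1 / 2) * f' (a + t * h)
        = ∫ t in (0:ℝ)..1, g (a + h * t) := by
          rw [← intervalIntegral.integral_const_mul]
          congr 1 with t
          simp only [g]
          ring_nf
      _ = h⁻¹ * ∫ x in a..a + h, g x := by simp [integral_comp_add_mul _ hh]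
  rw [hsub, integral_sub_midpoint_mul_deriv hf hf']
  field_simp
  ring

theorem preinvex_classical_estimate_general
    (A : Set ℝ) (η : ℝ → ℝ → ℝ) (a b : ℝ) (f : ℝ → ℝ)
    (hinv : InvexSet A η) (ha : a ∈ A) (hb : b ∈ A)
    (hab : a < a + η b a)
    (hdiff : ∀ x ∈ A, DifferentiableAt ℝ f x)
    (hint : IntervalIntegrable (deriv f) volume a (a + η b a))
    (hpre : PreinvexOn A η (fun x => |deriv f x|)) :
    |(f a + f (a + η b a)) / 2 -
        (1 / η b a) * ∫ x in a..(a + η b a), f x| ≤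
      |η b a| / 8 * (|deriv f a| + |deriv f b|) := by
  have hpos : 0 < η b a := by linarith
  have hderiv : ∀ x ∈ Set.uIcc a (a + η b a), HasDerivAt f (deriv f x) x :=
    fun x hx ↦ (hdiff x (hinv.uIcc_subset ha hb hx)).hasDerivAt
  rw [trapezoid_sub_average_eq hpos.ne' hderiv hint, abs_mul, abs_of_pos hpos]
  calc η b a * |∫ t in (0:ℝ)..1, (t - 1 / 2) * deriv f (a + t * η b a)|
      ≤ η b a * ((|deriv f a| + |deriv f b|) / 8) := by
        gcongr
        exact abs_integral_sub_half_mul_le (hpre a ha b hb)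
    _ = η b a / 8 * (|deriv f a| + |deriv f b|) := by ring

theorem preinvex_classical_estimate
    (A : Set ℝ) (η : ℝ → ℝ → ℝ) (a b : ℝ) (f : ℝ → ℝ)
    (hA : IsOpen A) (hinv : InvexSet A η) (ha : a ∈ A) (hb : b ∈ A)
    (hη : η b a ≠ 0) (hab : a < a + η b a)
    (hdiff : ∀ x ∈ A, DifferentiableAt ℝ f x)
    (hint : IntervalIntegrable (deriv f) volume a (a + η b a))
    (hpre : PreinvexOn A η (fun x => |deriv f x|)) :
    |(f a + f (a + η b a)) / 2 -
        (1 / η b a) * ∫ x in a..(a + η b a), f x| ≤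
      |η b a| / 8 * (|deriv f a| + |deriv f b|) :=
  preinvex_classical_estimate_general A η a b f hinv ha hb hab hdiff hint hpre
end
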